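/- Regarded as a ℤ/2ℤ-valued function of the rows a_0,…,a_n ∈ ℤ^n of the matrix A, the function B is symmetric modulo 2: for any two indices 0 ≤ i < j ≤ n, the value of B on the matrix obtained from A by interchanging rows i and j is congruent to B(A) modulo 2. -/

import Mathlib

open Matrix

/-- The strictly increasing embedding `Fin m → Fin (m + 2)` that skips the values
of `i` and `j` (for `i < j`): used to delete rows `i` and `j` of a matrix. -/
def skip2 {m : ℕ} (i j : Fin (m + 2)) (r : Fin m) : Fin (m + 2) :=
  if r.val < i.val then ⟨r.val, by have := r.isLt; omega⟩
  else if r.val + 1 < j.val then ⟨r.val + 1, by have := r.isLt; omega⟩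
  else ⟨r.val + 2, by have := r.isLt; omega⟩

/-- `B(A) = Σ_k Σ_{i<j} a_{ik} a_{jk} A^k_{ij}`, where `A^k_{ij}` is the determinant of
the matrix obtained from `A` by deleting rows `i`, `j` and column `k`. -/
def Bcoef {m : ℕ} (A : Matrix (Fin (m + 2)) (Fin (m + 1)) ℤ) : ℤ :=
  ∑ c : Fin (m + 1), ∑ i : Fin (m + 2), ∑ j : Fin (m + 2),
    if i < j then A i c * A j c * (A.submatrix (skip2 i j) c.succAbove).det else 0

/-!
Modulo 2 every permutation has sign `1`, so the minor obtained by deleting rows `i`, `j` and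
column `k` depends only on the set of remaining rows, i.e. on the unordered pair `{i, j}`.
Hence `B` reduces modulo 2 to a sum of a symmetric function over the unordered pairs of rows,
and permuting the rows (in particular swapping two of them) only reindexes that sum.
-/

open Finset Equiv

theorem sum_lt_comp_perm_of_symm {α M : Type*} [Fintype α] [LinearOrder α] [AddCommMonoid M]
    {g : α → α → M} (hg : ∀ a b, g a b = g b a) (σ : Perm α) :
    ∑ p, ∑ q, (if p < q then g (σ p) (σ q) else 0) =
      ∑ p, ∑ q, if p < q then g p q else 0 := by
  rw [← Fintype.sum_prod_type', ← Fintype.sum_prod_type', ← sum_filter, ← sum_filter]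
  have sort_mem : ∀ τ : Perm α, ∀ x ∈ univ.filter (fun x : α × α => x.1 < x.2),
      (min (τ x.1) (τ x.2), max (τ x.1) (τ x.2)) ∈ univ.filter (fun x : α × α => x.1 < x.2) :=
    fun τ x hx =>
      mem_filter.2 ⟨mem_univ _, min_lt_max.2 (τ.injective.ne (mem_filter.1 hx).2.ne)⟩
  refine sum_nbij' (fun x => (min (σ x.1) (σ x.2), max (σ x.1) (σ x.2)))
    (fun x => (min (σ.symm x.1) (σ.symm x.2), max (σ.symm x.1) (σ.symm x.2)))
    (sort_mem σ) (sort_mem σ.symm) ?_ ?_ ?_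
  all_goals
    rintro ⟨p, q⟩ h
    have h : p < q := (mem_filter.1 h).2
  · rcases le_total (σ p) (σ q) with h' | h' <;> simp [h', h.le]
  · rcases le_total (σ.symm p) (σ.symm q) with h' | h' <;> simp [h', h.le]
  · rcases le_total (σ p) (σ q) with h' | h' <;> simp [h', hg (σ p)]

theorem Matrix.det_submatrix_eq_of_range_eq {R ι κ n : Type*} [CommRing R] [CharP R 2]
    [Fintype n] [DecidableEq n] (M : Matrix ι κ R) {f g : n → ι} (hf : f.Injective)
    (hg : g.Injective) (hfg : Set.range f = Set.range g) (col : n → κ) :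
    (M.submatrix f col).det = (M.submatrix g col).det := by
  let e : Perm n := (ofInjective f hf).trans ((setCongr hfg).trans (ofInjective g hg).symm)
  have hge : g ∘ e = f := funext fun r => by simp [e, apply_ofInjective_symm]
  rw [← hge, ← Function.comp_id col, ← submatrix_submatrix, det_permute]
  rcases Int.units_eq_one_or (Perm.sign e) with h | h <;> simp [h, CharTwo.neg_eq]

section Skip2

variable {m : ℕ}

theorem val_skip2 (i j : Fin (m + 2)) (r : Fin m) :
    (skip2 i j r : ℕ) =
      if (r : ℕ) < i then (r : ℕ) else if (r : ℕ) + 1 < j then (r : ℕ) + 1 else (r : ℕ) + 2 := by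
  unfold skip2
  split_ifs <;> rfl

theorem skip2_injective (i j : Fin (m + 2)) : (skip2 i j).Injective := by
  intro a b hab
  rw [Fin.ext_iff, val_skip2, val_skip2] at hab
  ext
  split_ifs at hab <;> omega

theorem range_skip2 {i j : Fin (m + 2)} (h : i < j) :
    Set.range (skip2 i j) = {i, j}ᶜ := by
  rw [Fin.lt_def] at h
  ext x
  simp only [Set.mem_range, Set.mem_compl_iff, Set.mem_insert_iff, Set.mem_singleton_iff, not_or]
  constructor
  · rintro ⟨r, rfl⟩
    simp only [Fin.ext_iff, val_skip2]
    split_ifs <;> omega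
  · rintro ⟨hxi, hxj⟩
    simp only [Fin.ext_iff] at hxi hxj
    have := j.isLt
    refine ⟨⟨if (x : ℕ) < i then x else if (x : ℕ) < j then x - 1 else x - 2,
      by split_ifs <;> omega⟩, Fin.ext ?_⟩
    rw [val_skip2]
    dsimp only
    split_ifs <;> omega

end Skip2

section Bform

variable {R : Type*} [CommRing R] {m : ℕ}

def Bform (N : Matrix (Fin (m + 2)) (Fin (m + 1)) R) : R :=
  ∑ c : Fin (m + 1), ∑ i : Fin (m + 2), ∑ j : Fin (m + 2),
    if i < j then N i c * N j c * (N.submatrix (skip2 i j) c.succAbove).det else 0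

theorem RingHom.map_Bform {S : Type*} [CommRing S] (f : R →+* S)
    (N : Matrix (Fin (m + 2)) (Fin (m + 1)) R) : f (Bform N) = Bform (N.map f) := by
  simp only [Bform, map_sum, apply_ite f, map_zero, map_mul, RingHom.map_det,
    RingHom.mapMatrix_apply, submatrix_map, map_apply]

theorem intCast_Bcoef (A : Matrix (Fin (m + 2)) (Fin (m + 1)) ℤ) :
    ((Bcoef A : ℤ) : R) = Bform (A.map (↑)) :=
  (Int.castRingHom R).map_Bform A

def pairMinor (N : Matrix (Fin (m + 2)) (Fin (m + 1)) R) (c : Fin (m + 1))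
    (u v : Fin (m + 2)) : R :=
  (N.submatrix (skip2 (min u v) (max u v)) c.succAbove).det

theorem det_submatrix_perm_skip2 [CharP R 2] (N : Matrix (Fin (m + 2)) (Fin (m + 1)) R)
    (σ : Perm (Fin (m + 2))) (c : Fin (m + 1)) {p q : Fin (m + 2)} (hpq : p < q) :
    ((N.submatrix σ id).submatrix (skip2 p q) c.succAbove).det = pairMinor N c (σ p) (σ q) := by
  have hσ : min (σ p) (σ q) < max (σ p) (σ q) := min_lt_max.2 (σ.injective.ne hpq.ne)
  rw [submatrix_submatrix, Function.id_comp, pairMinor]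
  refine det_submatrix_eq_of_range_eq N (σ.injective.comp (skip2_injective p q))
    (skip2_injective _ _) ?_ _
  rw [Set.range_comp, range_skip2 hpq, range_skip2 hσ, Set.image_compl_eq σ.bijective,
    Set.image_pair]
  rcases le_total (σ p) (σ q) with h | h <;> simp [h, Set.pair_comm]

theorem Bform_submatrix_perm_eq_sum [CharP R 2] (N : Matrix (Fin (m + 2)) (Fin (m + 1)) R)
    (σ : Perm (Fin (m + 2))) :
    Bform (N.submatrix σ id) = ∑ c, ∑ p, ∑ q,
      if p < q then N (σ p) c * N (σ q) c * pairMinor N c (σ p) (σ q) else 0 := by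
  refine sum_congr rfl fun c _ => sum_congr rfl fun p _ => sum_congr rfl fun q _ => ?_
  split_ifs with hpq
  · rw [det_submatrix_perm_skip2 N σ c hpq, submatrix_apply, submatrix_apply, id]
  · rfl

theorem Bform_submatrix_perm [CharP R 2] (N : Matrix (Fin (m + 2)) (Fin (m + 1)) R)
    (σ : Perm (Fin (m + 2))) : Bform (N.submatrix σ id) = Bform N := by
  conv_rhs => rw [← submatrix_id_id N, ← coe_refl, Bform_submatrix_perm_eq_sum]
  rw [Bform_submatrix_perm_eq_sum]
  refine sum_congr rfl fun c _ => sum_lt_comp_perm_of_symm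
    (g := fun u v => N u c * N v c * pairMinor N c u v) (fun u v => ?_) σ
  rw [pairMinor, pairMinor, min_comm, max_comm, mul_comm (N u c)]

end Bform

theorem Bcoef_symm_mod_two_general {m : ℕ} (A : Matrix (Fin (m + 2)) (Fin (m + 1)) ℤ)
    (i j : Fin (m + 2)) :
    Bcoef (A.submatrix (Equiv.swap i j) id) ≡ Bcoef A [ZMOD 2] := by
  refine (ZMod.intCast_eq_intCast_iff _ _ 2).1 ?_
  rw [intCast_Bcoef, intCast_Bcoef, ← submatrix_map, Bform_submatrix_perm]

/-- Regarded as a `ℤ/2ℤ`-valued function of the rows of `A`, `B` is symmetric: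
interchanging two rows `i < j` of `A` does not change `B` modulo `2`. -/
theorem Bcoef_symm_mod_two {m : ℕ} (A : Matrix (Fin (m + 2)) (Fin (m + 1)) ℤ)
    (i j : Fin (m + 2)) (hij : i < j) :
    Bcoef (A.submatrix (Equiv.swap i j) id) ≡ Bcoef A [ZMOD 2] :=
  Bcoef_symm_mod_two_general A i j
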